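/- Let $C$ be a smooth complete complex curve of genus $g \geq 2$ with generators $a_1, b_1, \ldots, a_g, b_g$ of $\pi_1(C,c)$ subject to the relation $[a_1,b_1]\cdots[a_g,b_g]=1$. There exists a unitary representation $\rho : \pi_1(C,c) \to U(2)$ such that for every finite-index normal subgroup $H \lhd \pi_1(C,c)$, the restricted representation $\rho|_H$ is irreducible. -/

import Mathlib

/-- The surface group relator `[a₁,b₁]⋯[a_g,b_g]` in the free group on `2g` generators,
where `Sum.inl i` plays the role of `aᵢ` and `Sum.inr i` of `bᵢ`. -/
def surfaceRelator (g : ℕ) : FreeGroup (Fin g ⊕ Fin g) :=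
  (List.ofFn fun i : Fin g =>
    FreeGroup.of (Sum.inl i) * FreeGroup.of (Sum.inr i) *
      (FreeGroup.of (Sum.inl i))⁻¹ * (FreeGroup.of (Sum.inr i))⁻¹).prod

/-- The fundamental group `π₁(C)` of a smooth complete complex curve of genus `g`:
the group with generators `a₁,b₁,…,a_g,b_g` subject to `[a₁,b₁]⋯[a_g,b_g] = 1`. -/
abbrev SurfaceGroup (g : ℕ) : Type :=
  PresentedGroup ({surfaceRelator g} : Set (FreeGroup (Fin g ⊕ Fin g)))

/-!
Send `a₁, b₁` to `A = diag(μ, 1)` with `μ = e^i`, and every other `aᵢ, bᵢ` to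
`B = H A H⁻¹`, `H` the Hadamard matrix; since `aᵢ` and `bᵢ` have the same image, every
commutator in the relator dies. A normal subgroup of index `n` contains `a₁ⁿ` and `a₂ⁿ`.
As `μ` is not a root of unity (`π` is irrational), `Aⁿ = diag(μⁿ, 1)` has distinct eigenvalues,
so a nonzero invariant subspace contains a coordinate vector; `Bⁿ = H Aⁿ H⁻¹` has the nonzero
off-diagonal entries `(μⁿ - 1)/2`, so it then contains the other coordinate vector as well.
-/

open Matrix

section Irreducible
variable {K : Type*} [Field K]

theorem Submodule.eq_top_of_forall_single_mem {ι : Type*} [Finite ι] [DecidableEq ι]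
    {W : Submodule K (ι → K)} (h : ∀ i, Pi.single i 1 ∈ W) : W = ⊤ := by
  have := Fintype.ofFinite ι
  rw [eq_top_iff, ← (Pi.basisFun K ι).span_eq, Submodule.span_le]
  rintro _ ⟨i, rfl⟩
  simpa using h i

theorem Fin.two_eq_or_eq {i j : Fin 2} (hij : i ≠ j) (k : Fin 2) : k = i ∨ k = j := by
  omega

theorem single_mem_of_diagonal_invariant {d : Fin 2 → K} {i j : Fin 2} (hij : i ≠ j)
    (hd : d i ≠ d j) {W : Submodule K (Fin 2 → K)} (hW : ∀ w ∈ W, diagonal d *ᵥ w ∈ W)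
    {w : Fin 2 → K} (hw : w ∈ W) (hwi : w i ≠ 0) : Pi.single i 1 ∈ W := by
  have hv : diagonal d *ᵥ w - d j • w = ((d i - d j) * w i) • Pi.single i 1 := by
    ext k
    simp only [Pi.sub_apply, Pi.smul_apply, mulVec_diagonal, smul_eq_mul, ← sub_mul]
    rcases Fin.two_eq_or_eq hij k with rfl | rfl <;> simp [hij.symm, mul_comm]
  rw [← W.smul_mem_iff (mul_ne_zero (sub_ne_zero.2 hd) hwi), ← hv]
  exact W.sub_mem (hW w hw) (W.smul_mem _ hw)

theorem single_mem_of_single_mem_of_invariant {B : Matrix (Fin 2) (Fin 2) K} {i j : Fin 2}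
    (hij : i ≠ j) (hB : B j i ≠ 0) {W : Submodule K (Fin 2 → K)} (hW : ∀ w ∈ W, B *ᵥ w ∈ W)
    (hi : Pi.single i 1 ∈ W) : Pi.single j 1 ∈ W := by
  have hv : B *ᵥ Pi.single i 1 - B i i • Pi.single i 1 = B j i • Pi.single j 1 := by
    ext k
    rcases Fin.two_eq_or_eq hij k with rfl | rfl <;> simp [hij, hij.symm]
  rw [← W.smul_mem_iff hB, ← hv]
  exact W.sub_mem (hW _ hi) (W.smul_mem _ hi)

theorem eq_bot_or_eq_top_of_invariant {d : Fin 2 → K} (hd : d 0 ≠ d 1)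
    {B : Matrix (Fin 2) (Fin 2) K} (hB : ∀ i j, i ≠ j → B i j ≠ 0)
    {W : Submodule K (Fin 2 → K)} (hDW : ∀ w ∈ W, diagonal d *ᵥ w ∈ W)
    (hBW : ∀ w ∈ W, B *ᵥ w ∈ W) : W = ⊥ ∨ W = ⊤ := by
  refine or_iff_not_imp_left.2 fun hne => ?_
  obtain ⟨w, hw, hw0⟩ := W.ne_bot_iff.mp hne
  have h01 : (0 : Fin 2) ≠ 1 := by decide
  have hsingle : Pi.single 0 1 ∈ W ∨ Pi.single 1 1 ∈ W := by
    by_cases h0 : w 0 = 0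
    · refine .inr (single_mem_of_diagonal_invariant h01.symm hd.symm hDW hw fun h1 => hw0 ?_)
      ext k; fin_cases k <;> simp [h0, h1]
    · exact .inl (single_mem_of_diagonal_invariant h01 hd hDW hw h0)
  have hboth : Pi.single 0 1 ∈ W ∧ Pi.single 1 1 ∈ W := by
    rcases hsingle with h | h
    · exact ⟨h, single_mem_of_single_mem_of_invariant h01 (hB _ _ h01.symm) hBW h⟩
    · exact ⟨single_mem_of_single_mem_of_invariant h01.symm (hB _ _ h01) hBW h, h⟩
  refine Submodule.eq_top_of_forall_single_mem fun k => ?_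
  fin_cases k
  exacts [hboth.1, hboth.2]

end Irreducible

section Phase
variable {K : Type*} [Field K]

def phaseDiag (μ : K) : Matrix (Fin 2) (Fin 2) K := diagonal ![μ, 1]

-- `phaseHadamard μ = H * phaseDiag μ * H⁻¹` for the Hadamard matrix `H = !![1, 1; 1, -1]`.
def phaseHadamard (μ : K) : Matrix (Fin 2) (Fin 2) K :=
  !![(μ + 1) / 2, (μ - 1) / 2; (μ - 1) / 2, (μ + 1) / 2]

theorem phaseDiag_pow (μ : K) (n : ℕ) : phaseDiag μ ^ n = phaseDiag (μ ^ n) := by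
  rw [phaseDiag, phaseDiag, diagonal_pow]
  congr 1
  ext i; fin_cases i <;> simp

theorem phaseHadamard_one [NeZero (2 : K)] : phaseHadamard (1 : K) = 1 := by
  ext i j; fin_cases i <;> fin_cases j <;> simp [phaseHadamard]

theorem phaseHadamard_mul [NeZero (2 : K)] (μ ν : K) :
    phaseHadamard μ * phaseHadamard ν = phaseHadamard (μ * ν) := by
  have h2 : (2 : K) ≠ 0 := two_ne_zero
  ext i j; fin_cases i <;> fin_cases j <;> simp [phaseHadamard] <;> field_simp <;> ring

theorem phaseHadamard_pow [NeZero (2 : K)] (μ : K) (n : ℕ) :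
    phaseHadamard μ ^ n = phaseHadamard (μ ^ n) := by
  induction n with
  | zero => simp [phaseHadamard_one]
  | succ n ih => rw [pow_succ, ih, phaseHadamard_mul, pow_succ]

theorem eq_bot_or_eq_top_of_phase_invariant [NeZero (2 : K)] {μ : K} (hμ : μ ≠ 1)
    {W : Submodule K (Fin 2 → K)} (hD : ∀ w ∈ W, phaseDiag μ *ᵥ w ∈ W)
    (hH : ∀ w ∈ W, phaseHadamard μ *ᵥ w ∈ W) : W = ⊥ ∨ W = ⊤ := by
  refine eq_bot_or_eq_top_of_invariant (by simpa using hμ) (fun i j hij => ?_) hD hH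
  fin_cases i <;> fin_cases j <;> simp [phaseHadamard, sub_eq_zero, hμ, two_ne_zero] at hij ⊢

variable [StarRing K]

theorem phaseDiag_mem_unitaryGroup {μ : K} (hμ : μ ∈ unitary K) :
    phaseDiag μ ∈ unitaryGroup (Fin 2) K := by
  rw [mem_unitaryGroup_iff', phaseDiag, star_eq_conjTranspose, diagonal_conjTranspose,
    diagonal_mul_diagonal, ← diagonal_one]
  congr 1
  ext i; fin_cases i <;> simp [Unitary.star_mul_self_of_mem hμ]

theorem phaseHadamard_mem_unitaryGroup [NeZero (2 : K)] {μ : K} (hμ : μ ∈ unitary K) :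
    phaseHadamard μ ∈ unitaryGroup (Fin 2) K := by
  have h2 : (2 : K) ≠ 0 := two_ne_zero
  have hμ' := Unitary.star_mul_self_of_mem hμ
  rw [mem_unitaryGroup_iff']
  ext i j
  fin_cases i <;> fin_cases j <;> simp [phaseHadamard, mul_apply, Fin.sum_univ_two] <;>
    field_simp <;> linear_combination (2 : K) * hμ'

end Phase

namespace SurfaceGroup
variable {G : Type*} [Group G] {g : ℕ}

theorem lift_surfaceRelator_of_commute (f : Fin g ⊕ Fin g → G)
    (hf : ∀ i, Commute (f (.inl i)) (f (.inr i))) : FreeGroup.lift f (surfaceRelator g) = 1 := by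
  rw [surfaceRelator, map_list_prod]
  refine List.prod_eq_one fun x hx => ?_
  rw [List.map_ofFn] at hx
  obtain ⟨i, rfl⟩ := List.mem_ofFn.mp hx
  simp [(hf i).eq]

def liftOfCommute (f : Fin g ⊕ Fin g → G) (hf : ∀ i, Commute (f (.inl i)) (f (.inr i))) :
    SurfaceGroup g →* G :=
  PresentedGroup.toGroup (by rintro r rfl; exact lift_surfaceRelator_of_commute f hf)

@[simp]
theorem liftOfCommute_of (f : Fin g ⊕ Fin g → G) (hf : ∀ i, Commute (f (.inl i)) (f (.inr i)))
    (x : Fin g ⊕ Fin g) : liftOfCommute f hf (PresentedGroup.of x) = f x :=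
  PresentedGroup.toGroup.of _

end SurfaceGroup

theorem Circle.exp_one_pow_ne_one {n : ℕ} (hn : n ≠ 0) : (Circle.exp 1) ^ n ≠ 1 := by
  intro h
  rw [← Circle.exp_natCast_mul, mul_one] at h
  obtain ⟨k, hk⟩ := Circle.exp_eq_one.mp h
  have hk0 : (k : ℝ) ≠ 0 := by
    intro hk0
    rw [hk0, zero_mul] at hk
    exact hn (by exact_mod_cast hk)
  exact irrational_pi ⟨n / (2 * k), by push_cast; field_simp; linarith⟩

theorem Circle.coe_mem_unitary (z : Circle) : (z : ℂ) ∈ unitary ℂ := by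
  rw [Unitary.mem_iff, Complex.star_def, ← Circle.coe_inv_eq_conj, ← Circle.coe_mul,
    ← Circle.coe_mul, inv_mul_cancel, mul_inv_cancel, Circle.coe_one]
  exact ⟨rfl, rfl⟩

/-- For `g ≥ 2` there is a unitary representation `ρ : π₁(C) → U(2)` such that for every
finite-index normal subgroup `H ⊴ π₁(C)`, the restriction `ρ|_H` is irreducible:
the only `ρ(H)`-invariant subspaces of `ℂ²` are `0` and `ℂ²`. -/
theorem stmt11 (g : ℕ) (hg : 2 ≤ g) :
    ∃ ρ : SurfaceGroup g →* Matrix.unitaryGroup (Fin 2) ℂ,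
      ∀ H : Subgroup (SurfaceGroup g), H.Normal → H.index ≠ 0 →
        ∀ W : Submodule ℂ (Fin 2 → ℂ),
          (∀ x ∈ H, ∀ w ∈ W, ((ρ x : Matrix (Fin 2) (Fin 2) ℂ)).mulVec w ∈ W) →
          W = ⊥ ∨ W = ⊤ := by
  let μ : Circle := Circle.exp 1
  let A : unitaryGroup (Fin 2) ℂ :=
    ⟨phaseDiag (μ : ℂ), phaseDiag_mem_unitaryGroup μ.coe_mem_unitary⟩
  let B : unitaryGroup (Fin 2) ℂ :=
    ⟨phaseHadamard (μ : ℂ), phaseHadamard_mem_unitaryGroup μ.coe_mem_unitary⟩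
  let f : Fin g → unitaryGroup (Fin 2) ℂ := fun i => if (i : ℕ) = 0 then A else B
  refine ⟨SurfaceGroup.liftOfCommute (Sum.elim f f) fun i => Commute.refl (f i),
    fun H _ hH W hW => ?_⟩
  have hμ : (μ : ℂ) ^ H.index ≠ 1 := by
    rw [← Circle.coe_pow, ne_eq, Circle.coe_eq_one]
    exact Circle.exp_one_pow_ne_one hH
  refine eq_bot_or_eq_top_of_phase_invariant hμ (fun w hw => ?_) (fun w hw => ?_)
  · simpa [f, A, phaseDiag_pow] using
      hW _ (H.pow_index_mem (PresentedGroup.of (.inl ⟨0, by omega⟩))) w hw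
  · simpa [f, B, phaseHadamard_pow] using
      hW _ (H.pow_index_mem (PresentedGroup.of (.inl ⟨1, by omega⟩))) w hw
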